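/- arXiv:2211.14232 — 3 statements merged into one kernel-verified Lean document; each statement's English description precedes it below -/
import Mathlib

section
/- Call a set S of natural numbers irregular if for every n > 0 and every P ⊆ {0,...,n−1} there exists x ∈ ℕ such that {m < n : x + m ∈ S} = P. Then there exist uncountably many (indeed continuum many) irregular subsets of ℕ. -/
/-- `S ⊆ ℕ` is irregular if every finite 0/1-pattern occurs in it: for every `n > 0`
and every `P ⊆ {0, …, n-1}` there is an `x` such that `{m < n : x + m ∈ S} = P`. -/
def Irregular (S : Set ℕ) : Prop :=
  ∀ n : ℕ, 0 < n → ∀ P ⊆ Finset.range n, ∃ x : ℕ, ∀ m < n, (x + m ∈ S ↔ m ∈ P)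

namespace Stmt4aux

noncomputable def e : ℕ ≃ ℕ × Finset ℕ := (Denumerable.eqv (ℕ × Finset ℕ)).symm

noncomputable def nlen (k : ℕ) : ℕ := (e k).1 + 1
noncomputable def pat (k : ℕ) : Finset ℕ := (e k).2

noncomputable def c : ℕ → ℕ
  | 0 => 0
  | k + 1 => c k + nlen k + 1

lemma c_lt_succ (k : ℕ) : c k < c (k + 1) := by
  simp only [c]; omega

lemma c_mono : StrictMono c := strictMono_nat_of_lt_succ c_lt_succ

lemma le_c (k : ℕ) : k ≤ c k := by
  induction k with
  | zero => simp [c]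
  | succ n ih => have := c_lt_succ n; omega

noncomputable def kOf (x : ℕ) : ℕ := Nat.findGreatest (fun k => c k ≤ x) x

lemma c_kOf_le (x : ℕ) : c (kOf x) ≤ x :=
  Nat.findGreatest_spec (P := fun k => c k ≤ x) (Nat.zero_le x) (by simp [c])

lemma lt_c_kOf_succ (x : ℕ) : x < c (kOf x + 1) := by
  by_contra h
  push_neg at h
  exact Nat.findGreatest_is_greatest (Nat.lt_succ_self _)
    (le_trans (le_c _) h) h

lemma kOf_eq {k x : ℕ} (h1 : c k ≤ x) (h2 : x < c (k + 1)) : kOf x = k := by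
  refine le_antisymm ?_ (Nat.le_findGreatest (le_trans (le_c k) h1) h1)
  by_contra h
  push_neg at h
  have : c (k + 1) ≤ x := le_trans (c_mono.monotone h) (c_kOf_le x)
  omega

noncomputable def S (A : Set ℕ) : Set ℕ :=
  { x | (x - c (kOf x) < nlen (kOf x) ∧ x - c (kOf x) ∈ pat (kOf x)) ∨
        (nlen (kOf x) ≤ x - c (kOf x) ∧ kOf x ∈ A) }

lemma mem_S_pattern (A : Set ℕ) (k m : ℕ) (hm : m < nlen k) :
    (c k + m ∈ S A ↔ m ∈ pat k) := by
  have h1 : c k ≤ c k + m := Nat.le_add_right _ _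
  have h2 : c k + m < c (k + 1) := by simp only [c]; omega
  have hk : kOf (c k + m) = k := kOf_eq h1 h2
  simp [S, hk, Nat.add_sub_cancel_left, hm]

lemma mem_S_code (A : Set ℕ) (k : ℕ) :
    (c k + nlen k ∈ S A ↔ k ∈ A) := by
  have h2 : c k + nlen k < c (k + 1) := by simp only [c]; omega
  have hk : kOf (c k + nlen k) = k := kOf_eq (Nat.le_add_right _ _) h2
  simp [S, hk, Nat.add_sub_cancel_left]

lemma irregular_S (A : Set ℕ) : Irregular (S A) := by
  intro n hn P _
  set k := e.symm (n - 1, P) with hk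
  have he : e k = (n - 1, P) := e.apply_symm_apply _
  have hlen : nlen k = n := by simp [nlen, he]; omega
  have hpat : pat k = P := by simp [pat, he]
  refine ⟨c k, fun m hm => ?_⟩
  rw [mem_S_pattern A k m (by omega), hpat]

lemma S_injective : Function.Injective S := by
  intro A B hAB
  ext k
  rw [← mem_S_code A k, ← mem_S_code B k, hAB]

end Stmt4aux

theorem stmt_4 : Cardinal.mk {S : Set ℕ // Irregular S} = 2 ^ Cardinal.aleph0 := by
  apply le_antisymm
  · calc Cardinal.mk {S : Set ℕ // Irregular S} ≤ Cardinal.mk (Set ℕ) :=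
          Cardinal.mk_subtype_le _
      _ = 2 ^ Cardinal.aleph0 := by simp [Cardinal.mk_set]
  · calc (2 : Cardinal) ^ Cardinal.aleph0 = Cardinal.mk (Set ℕ) := by
          simp [Cardinal.mk_set]
      _ ≤ Cardinal.mk {S : Set ℕ // Irregular S} := by
          apply Cardinal.mk_le_of_injective
            (f := fun A => ⟨Stmt4aux.S A, Stmt4aux.irregular_S A⟩)
          intro A B h
          exact Stmt4aux.S_injective (congrArg Subtype.val h)
end

section
/- Any filling of the marker positions in the pattern-concatenation sequence yields an irregular set: if T ⊆ ℕ satisfies S₀ ⊆ T ⊆ S₁ (where S₀, S₁ are as in the marker construction), then T is irregular. -/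
/-- Starting position of the block of the construction listing all binary strings of
length `n` (blocks for lengths `1, …, n-1`, each of length `j * 2^j + 1`, come before). -/
def blockStart (n : ℕ) : ℕ := ∑ j ∈ Finset.Ico 1 n, (j * 2 ^ j + 1)

/-- The set of positions holding a fixed `1`: position `m` of the `k`-th (lexicographically,
most significant bit first) binary string of length `n`, for those `m` where that string has
bit `1`. -/
def fixedOnes : Set ℕ :=
  { p | ∃ n : ℕ, 1 ≤ n ∧ ∃ k < 2 ^ n, ∃ m < n,
      p = blockStart n + k * n + m ∧ Nat.testBit k (n - 1 - m) = true }

/-- The position of the `i`-th marker: it follows the `2^(i+1)` binary strings of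
length `i+1`. -/
def markerPos (i : ℕ) : ℕ := blockStart (i + 1) + (i + 1) * 2 ^ (i + 1)

/-- `S₀`: all markers filled with `0`. -/
def S₀ : Set ℕ := fixedOnes

/-- `S₁`: all markers filled with `1`. -/
def S₁ : Set ℕ := fixedOnes ∪ Set.range markerPos

lemma sum_range_two_pow_lt (a : ℕ) : ∑ i ∈ Finset.range a, 2 ^ i < 2 ^ a := by
  induction a with
  | zero => simp
  | succ a ih =>
    rw [Finset.sum_range_succ, pow_succ]
    omega

lemma testBit_sum_two_pow (s : Finset ℕ) (j : ℕ) :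
    (∑ i ∈ s, 2 ^ i).testBit j = true ↔ j ∈ s := by
  induction s using Finset.induction_on_max with
  | empty => simp
  | insert a s ha ih =>
    have hs : ∑ i ∈ s, 2 ^ i < 2 ^ a := by
      calc ∑ i ∈ s, 2 ^ i ≤ ∑ i ∈ Finset.range a, 2 ^ i :=
            Finset.sum_le_sum_of_subset (fun x hx => Finset.mem_range.2 (ha x hx))
        _ < 2 ^ a := sum_range_two_pow_lt a
    rw [Finset.sum_insert (fun h => absurd (ha a h) (lt_irrefl a))]
    rcases lt_trichotomy j a with h | rfl | h
    · rw [Nat.testBit_two_pow_add_gt h, ih, Finset.mem_insert]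
      constructor
      · exact fun hj => Or.inr hj
      · rintro (rfl | hj)
        · exact absurd h (lt_irrefl _)
        · exact hj
    · rw [Nat.testBit_two_pow_add_eq, Nat.testBit_lt_two_pow hs]
      simp
    · have hlt : 2 ^ a + ∑ i ∈ s, 2 ^ i < 2 ^ j := by
        calc 2 ^ a + ∑ i ∈ s, 2 ^ i < 2 ^ a + 2 ^ a := by omega
          _ = 2 ^ (a + 1) := by rw [pow_succ]; omega
          _ ≤ 2 ^ j := Nat.pow_le_pow_right (by norm_num) h
      rw [Nat.testBit_lt_two_pow hlt]
      have : j ∉ insert a s := by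
        rw [Finset.mem_insert]
        rintro (rfl | hj)
        · exact absurd h (lt_irrefl _)
        · exact absurd (ha j hj) (by omega)
      simp [this]

lemma blockStart_succ {n : ℕ} (h : 1 ≤ n) :
    blockStart (n + 1) = blockStart n + (n * 2 ^ n + 1) := by
  unfold blockStart
  rw [Finset.sum_Ico_succ_top h]

lemma blockStart_mono : Monotone blockStart := fun a b hab =>
  Finset.sum_le_sum_of_subset (Finset.Ico_subset_Ico le_rfl hab)

lemma pos_lt {n k m : ℕ} (hn : 1 ≤ n) (hk : k < 2 ^ n) (hm : m < n) :
    k * n + m < n * 2 ^ n := by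
  have h1 : (k + 1) * n ≤ 2 ^ n * n := Nat.mul_le_mul_right n hk
  rw [add_mul, one_mul] at h1
  rw [mul_comm n]
  omega

lemma pos_lt_blockStart_succ {n k m : ℕ} (hn : 1 ≤ n) (hk : k < 2 ^ n) (hm : m < n) :
    blockStart n + k * n + m < blockStart (n + 1) := by
  have h1 := pos_lt hn hk hm
  have h2 := blockStart_succ hn
  omega

lemma block_unique {n n' k k' m m' : ℕ} (hn : 1 ≤ n) (hn' : 1 ≤ n')
    (hk : k < 2 ^ n) (hk' : k' < 2 ^ n') (hm : m < n) (hm' : m' < n')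
    (h : blockStart n + k * n + m = blockStart n' + k' * n' + m') :
    n = n' ∧ k = k' ∧ m = m' := by
  have key : ∀ a a' b b' c c' : ℕ, 1 ≤ a → 1 ≤ a' → b < 2 ^ a → b' < 2 ^ a' →
      c < a → c' < a' → a < a' →
      blockStart a + b * a + c ≠ blockStart a' + b' * a' + c' := by
    intro a a' b b' c c' ha ha' hb hb' hc hc' haa heq
    have h1 := pos_lt_blockStart_succ ha hb hc
    have h2 : blockStart (a + 1) ≤ blockStart a' := blockStart_mono haa
    omega
  have hnn : n = n' := by
    rcases lt_trichotomy n n' with hlt | heq | hgt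
    · exact absurd h (key n n' k k' m m' hn hn' hk hk' hm hm' hlt)
    · exact heq
    · exact absurd h.symm (key n' n k' k m' m hn' hn hk' hk hm' hm hgt)
  subst hnn
  have he : k * n + m = k' * n + m' := by omega
  have hdiv : ∀ b c : ℕ, c < n → (b * n + c) / n = b := by
    intro b c hc
    rw [add_comm, Nat.add_mul_div_right _ _ (by omega : 0 < n), Nat.div_eq_of_lt hc, zero_add]
  have hkk : k = k' := by
    rw [← hdiv k m hm, ← hdiv k' m' hm', he]
  subst hkk
  exact ⟨rfl, rfl, by omega⟩

lemma marker_ne {n k m i : ℕ} (hn : 1 ≤ n) (hk : k < 2 ^ n) (hm : m < n) :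
    blockStart n + k * n + m ≠ markerPos i := by
  intro h
  rw [markerPos] at h
  rcases lt_trichotomy n (i + 1) with hlt | heq | hgt
  · have h2 := pos_lt_blockStart_succ hn hk hm
    have h3 : blockStart (n + 1) ≤ blockStart (i + 1) := blockStart_mono hlt
    omega
  · subst heq
    have h1 := pos_lt hn hk hm
    omega
  · have h4 : blockStart (i + 1 + 1) = blockStart (i + 1) + ((i + 1) * 2 ^ (i + 1) + 1) :=
      blockStart_succ (by omega)
    have h5 : blockStart (i + 1 + 1) ≤ blockStart n := blockStart_mono (by omega)
    omega

theorem stmt_8 (T : Set ℕ) (h₀ : S₀ ⊆ T) (h₁ : T ⊆ S₁) : Irregular T := by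
  intro n hn P hP
  set k : ℕ := ∑ m ∈ P, 2 ^ (n - 1 - m) with hkdef
  have himg : k = ∑ j ∈ P.image (fun m => n - 1 - m), 2 ^ j := by
    rw [hkdef, Finset.sum_image]
    intro a ha b hb hab
    have ha' := Finset.mem_range.1 (hP ha)
    have hb' := Finset.mem_range.1 (hP hb)
    beta_reduce at hab
    omega
  have hbit : ∀ m < n, (Nat.testBit k (n - 1 - m) = true ↔ m ∈ P) := by
    intro m hm
    rw [himg, testBit_sum_two_pow, Finset.mem_image]
    constructor
    · rintro ⟨a, haP, hab⟩
      have ha' := Finset.mem_range.1 (hP haP)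
      have : a = m := by omega
      rwa [this] at haP
    · intro hmP; exact ⟨m, hmP, rfl⟩
  have hk : k < 2 ^ n := by
    rw [himg]
    calc ∑ j ∈ P.image (fun m => n - 1 - m), 2 ^ j
        ≤ ∑ j ∈ Finset.range n, 2 ^ j := by
          apply Finset.sum_le_sum_of_subset
          intro j hj
          rw [Finset.mem_image] at hj
          obtain ⟨a, _, rfl⟩ := hj
          exact Finset.mem_range.2 (by omega)
      _ < 2 ^ n := sum_range_two_pow_lt n
  refine ⟨blockStart n + k * n, fun m hm => ?_⟩
  constructor
  · intro hT
    rcases h₁ hT with hf | ⟨i, hi⟩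
    · obtain ⟨n', hn', k', hk', m', hm', hpeq, hbit'⟩ := hf
      obtain ⟨rfl, rfl, rfl⟩ := block_unique hn hn' hk hk' hm hm' hpeq
      exact (hbit m hm).1 hbit'
    · exact absurd hi.symm (marker_ne hn hk hm)
  · intro hmP
    exact h₀ ⟨n, hn, k, hk, m, hm, rfl, (hbit m hm).2 hmP⟩
end

section
/- If b is a bijection between two classes of structures such that any isomorphism between distinct structures M, N is an isomorphism between b(M) and b(N) and vice versa, and every structure has an isomorphic copy distinct from itself within the class, then b preserves automorphism groups: Aut(M) = Aut(b(M)) for every M. -/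
open FirstOrder

universe u v w

/-- `f` is an isomorphism from the `L`-structure `s` on `α` to the `L`-structure `t`
on `β`: it is a bijection preserving all functions and relations. -/
def IsIsoOn {L : FirstOrder.Language.{u, v}} {α β : Type w}
    (s : L.Structure α) (t : L.Structure β) (f : α ≃ β) : Prop :=
  (∀ {n : ℕ} (F : L.Functions n) (x : Fin n → α), f (s.funMap F x) = t.funMap F (f ∘ x)) ∧
  (∀ {n : ℕ} (r : L.Relations n) (x : Fin n → α), s.RelMap r x ↔ t.RelMap r (f ∘ x))


lemma IsIsoOn.trans' {L : FirstOrder.Language.{u, v}} {α β γ : Type w}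
    {s : L.Structure α} {t : L.Structure β} {u : L.Structure γ}
    {f : α ≃ β} {g : β ≃ γ} (hf : IsIsoOn s t f) (hg : IsIsoOn t u g) :
    IsIsoOn s u (f.trans g) := by
  constructor
  · intro n F x
    simp only [Equiv.trans_apply, hf.1 F x, hg.1 F (f ∘ x)]
    rfl
  · intro n r x
    rw [hf.2 r x, hg.2 r (f ∘ x)]
    rfl

lemma IsIsoOn.symm' {L : FirstOrder.Language.{u, v}} {α β : Type w}
    {s : L.Structure α} {t : L.Structure β}
    {f : α ≃ β} (hf : IsIsoOn s t f) : IsIsoOn t s f.symm := by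
  constructor
  · intro n F x
    apply f.injective
    rw [hf.1 F (f.symm ∘ x), Equiv.apply_symm_apply]
    congr 1
    ext i
    simp
  · intro n r x
    rw [hf.2 r (f.symm ∘ x)]
    congr! 1
    ext i
    simp

lemma iso_comp_iff {L : FirstOrder.Language.{u, v}} {α β : Type w}
    {s : L.Structure α} {t : L.Structure β}
    {f : α ≃ β} (hf : IsIsoOn s t f) (π : Equiv.Perm α) :
    IsIsoOn s s π ↔ IsIsoOn s t (π.trans f) := by
  constructor
  · exact fun h => h.trans' hf
  · intro h
    have := h.trans' hf.symm'
    have heq : (π.trans f).trans f.symm = π := by ext x; simp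
    rwa [heq] at this

theorem stmt_14 {L : FirstOrder.Language.{u, v}}
    (K K' : ∀ α : Type w, Set (L.Structure α))
    (b : ∀ α : Type w, K α ≃ K' α)
    (hiso : ∀ (α β : Type w) (s : K α) (t : K β),
      (⟨α, s.1⟩ : Σ γ : Type w, L.Structure γ) ≠ ⟨β, t.1⟩ →
      ∀ f : α ≃ β, (IsIsoOn s.1 t.1 f ↔ IsIsoOn ((b α) s).1 ((b β) t).1 f))
    (hcopy : ∀ (α : Type w) (s : K α), ∃ (β : Type w) (t : K β),
      (⟨α, s.1⟩ : Σ γ : Type w, L.Structure γ) ≠ ⟨β, t.1⟩ ∧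
      ∃ f : α ≃ β, IsIsoOn s.1 t.1 f) :
    ∀ (α : Type w) (s : K α) (π : Equiv.Perm α),
      IsIsoOn s.1 s.1 π ↔ IsIsoOn ((b α) s).1 ((b α) s).1 π := by
  intro α s π
  obtain ⟨β, t, hne, f, hf⟩ := hcopy α s
  have hbf : IsIsoOn ((b α) s).1 ((b β) t).1 f := (hiso α β s t hne f).mp hf
  rw [iso_comp_iff hf π, iso_comp_iff hbf π, hiso α β s t hne (π.trans f)]
end
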